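/- arXiv:2305.20051 — 3 statements merged into one kernel-verified Lean document; each statement's English description precedes it below -/
import Mathlib

section
/- Let A be an invertible linear map on ℝ^d (d ≥ 2) and ν a unit vector in ℝ^d. Then the Jacobian determinant of the restriction of A to the hyperplane ν^⊥ (as a map into ℝ^d) equals |det A| · ‖(Aᵀ)⁻¹ ν‖. Equivalently, for every Borel set S ⊆ ν^⊥, the (d−1)-dimensional Hausdorff measure satisfies H^{d−1}(A(S)) = |det A| · ‖(Aᵀ)⁻¹ ν‖ · H^{d−1}(S). -/
open scoped RealInnerProductSpace MeasureTheory
open MeasureTheory Module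

/-!
Put `w = (Aᵀ)⁻¹ ν`, so that `⟪w, A x⟫ = ⟪ν, x⟫`: `A` maps `ν^⊥` into `w^⊥`. In orthonormal bases
`(ν, ν^⊥)` and `(w / ‖w‖, w^⊥)` the matrix of `A` is therefore block triangular, with corner entry
`⟪w / ‖w‖, A ν⟫ = 1 / ‖w‖`, so `|det A| = J / ‖w‖` where `J` is the norm determinant of
`A|_{ν^⊥}`. This `J` is the factor by which `A` scales `H^{d-1}` on subsets of `ν^⊥`.
-/

theorem Matrix.det_succ_of_row_zero_succ_eq_zero {R : Type*} [CommRing R] {n : ℕ}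
    (A : Matrix (Fin (n + 1)) (Fin (n + 1)) R) (h : ∀ j : Fin n, A 0 j.succ = 0) :
    A.det = A 0 0 * (A.submatrix Fin.succ Fin.succ).det := by
  simp [Matrix.det_succ_row_zero A, Fin.sum_univ_succ, h]

variable {E F : Type*} [NormedAddCommGroup E] [InnerProductSpace ℝ E]
  [NormedAddCommGroup F] [InnerProductSpace ℝ F]

namespace OrthonormalBasis

noncomputable def consUnitVector {n : ℕ} {ν : E} (hν : ‖ν‖ = 1)
    (b : OrthonormalBasis (Fin n) ℝ (ℝ ∙ ν)ᗮ) : OrthonormalBasis (Fin (n + 1)) ℝ E :=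
  .mkOfOrthogonalEqBot (v := Matrix.vecCons ν fun i ↦ (b i : E))
    (orthonormal_vecCons_iff.2 ⟨hν,
      fun i ↦ Submodule.mem_orthogonal_singleton_iff_inner_right.1 (b i).2,
      b.orthonormal.comp_linearIsometry (ℝ ∙ ν)ᗮ.subtypeₗᵢ⟩) <| by
    refine (Submodule.eq_bot_iff _).2 fun x hx ↦ ?_
    have hxν : x ∈ (ℝ ∙ ν)ᗮ := Submodule.mem_orthogonal_singleton_iff_inner_right.2 <|
      hx ν (Submodule.subset_span ⟨0, rfl⟩)
    suffices b.repr ⟨x, hxν⟩ = 0 by simpa using this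
    ext i
    simpa [b.repr_apply_apply] using hx (b i) (Submodule.subset_span ⟨i.succ, rfl⟩)

@[simp]
theorem coe_consUnitVector {n : ℕ} {ν : E} (hν : ‖ν‖ = 1)
    (b : OrthonormalBasis (Fin n) ℝ (ℝ ∙ ν)ᗮ) :
    ⇑(consUnitVector hν b) = Matrix.vecCons ν fun i ↦ (b i : E) :=
  OrthonormalBasis.coe_of_orthogonal_eq_bot_mk _ _

end OrthonormalBasis

namespace LinearMap

theorem normDet_eq_normDet_comp_subtype_mul [FiniteDimensional ℝ E] [FiniteDimensional ℝ F]
    {f : E →ₗ[ℝ] F} {ν : E} {u : F} (hν : ‖ν‖ = 1) (hu : ‖u‖ = 1)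
    (hrank : finrank ℝ E = finrank ℝ F) (hf : ∀ x ∈ (ℝ ∙ ν)ᗮ, f x ∈ (ℝ ∙ u)ᗮ) :
    f.normDet = (f ∘ₗ (ℝ ∙ ν)ᗮ.subtype).normDet * |⟪u, f ν⟫| := by
  set n := finrank ℝ (ℝ ∙ ν)ᗮ
  have hL : finrank ℝ (ℝ ∙ u)ᗮ = n := by
    have hE := Submodule.finrank_add_finrank_orthogonal (ℝ ∙ ν)
    have hF := Submodule.finrank_add_finrank_orthogonal (ℝ ∙ u)
    rw [finrank_span_singleton (by rintro rfl; simp at hν)] at hE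
    rw [finrank_span_singleton (by rintro rfl; simp at hu)] at hF
    omega
  let kb := stdOrthonormalBasis ℝ (ℝ ∙ ν)ᗮ
  let lb := (stdOrthonormalBasis ℝ (ℝ ∙ u)ᗮ).reindex (finCongr hL)
  let g := (f ∘ₗ (ℝ ∙ ν)ᗮ.subtype).codRestrict (ℝ ∙ u)ᗮ fun x ↦ hf x x.2
  let T := f.toMatrix (kb.consUnitVector hν).toBasis (lb.consUnitVector hu).toBasis
  have hT : ∀ i j, T i j = ⟪lb.consUnitVector hu i, f (kb.consUnitVector hν j)⟫ := fun i j ↦ by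
    simp [T, LinearMap.toMatrix_apply, OrthonormalBasis.repr_apply_apply]
  have hT0 : ∀ j : Fin n, T 0 j.succ = 0 := fun j ↦ by
    simpa [hT] using Submodule.mem_orthogonal_singleton_iff_inner_right.1 (hf _ (kb j).2)
  have hTsucc : T.submatrix Fin.succ Fin.succ = g.toMatrix kb.toBasis lb.toBasis := by
    ext i j
    simp only [Matrix.submatrix_apply, hT, OrthonormalBasis.coe_consUnitVector,
      Matrix.cons_val_succ, toMatrix_apply, OrthonormalBasis.coe_toBasis,
      OrthonormalBasis.coe_toBasis_repr_apply, OrthonormalBasis.repr_apply_apply,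
      Submodule.coe_inner]
    rfl
  have hg : (f ∘ₗ (ℝ ∙ ν)ᗮ.subtype).normDet = g.normDet := (normDet_codRestrict _).symm
  rw [normDet_eq_norm_det_toMatrix f (kb.consUnitVector hν) (lb.consUnitVector hu), hg,
    normDet_eq_norm_det_toMatrix g kb lb,
    Matrix.det_succ_of_row_zero_succ_eq_zero T hT0, hTsucc]
  simp [hT, mul_comm]

end LinearMap

theorem ContinuousLinearEquiv.normDet_comp_subtype_orthogonal [FiniteDimensional ℝ E]
    (A : E ≃L[ℝ] E) {ν : E} (hν : ‖ν‖ = 1) :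
    ((A : E →ₗ[ℝ] E) ∘ₗ (ℝ ∙ ν)ᗮ.subtype).normDet =
      |LinearMap.det (A : E →ₗ[ℝ] E)| * ‖LinearMap.adjoint (A.symm : E →ₗ[ℝ] E) ν‖ := by
  set w := LinearMap.adjoint (A.symm : E →ₗ[ℝ] E) ν
  have hwA : ∀ x, ⟪w, A x⟫ = ⟪ν, x⟫ := fun x ↦ by simp [w, LinearMap.adjoint_inner_left]
  have hw : 0 < ‖w‖ := norm_pos_iff.2 fun h ↦ by simpa [h, hν] using hwA ν
  set u := ‖w‖⁻¹ • w
  have hu : ‖u‖ = 1 := by simp [u, norm_smul, hw.ne']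
  have huA : ∀ x, ⟪u, A x⟫ = ‖w‖⁻¹ * ⟪ν, x⟫ := by simp [u, real_inner_smul_left, hwA]
  have hdet := LinearMap.normDet_eq_normDet_comp_subtype_mul (f := (A : E →ₗ[ℝ] E)) hν
    hu rfl fun x hx ↦ by
      rw [Submodule.mem_orthogonal_singleton_iff_inner_right] at hx ⊢
      simpa [hx] using huA x
  rw [LinearMap.normDet_eq_abs_det] at hdet
  simp only [LinearEquiv.coe_coe, ContinuousLinearEquiv.coe_toLinearEquiv, huA,
    real_inner_self_eq_norm_sq, hν] at hdet
  rw [hdet, abs_of_nonneg (by positivity)]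
  field_simp

theorem LinearMap.hausdorffMeasure_image_of_subset_submodule [MeasurableSpace E] [BorelSpace E]
    [MeasurableSpace F] [BorelSpace F] (f : E →ₗ[ℝ] F) {K : Submodule ℝ E} [FiniteDimensional ℝ K]
    {s : Set E} (hs : s ⊆ K) :
    μH[finrank ℝ K] (f '' s) = ENNReal.ofReal (f ∘ₗ K.subtype).normDet * μH[finrank ℝ K] s := by
  obtain ⟨t, rfl⟩ : ∃ t : Set K, K.subtype '' t = s :=
    ⟨K.subtype ⁻¹' s, Set.image_preimage_eq_of_subset (by simpa using hs)⟩
  rw [Set.image_image]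
  change μH[_] ((f ∘ₗ K.subtype) '' t) = _
  rw [hausdorffMeasure_image,
    ← K.subtypeₗᵢ.isometry.hausdorffMeasure_image (Or.inl (Nat.cast_nonneg _))]
  rfl

theorem stmt0_general (d : ℕ)
    (A : EuclideanSpace ℝ (Fin d) ≃L[ℝ] EuclideanSpace ℝ (Fin d))
    (ν : EuclideanSpace ℝ (Fin d)) (hν : ‖ν‖ = 1)
    (S : Set (EuclideanSpace ℝ (Fin d)))
    (hSperp : ∀ x ∈ S, ⟪x, ν⟫ = 0) :
    μH[(d : ℝ) - 1] ((A : EuclideanSpace ℝ (Fin d) → EuclideanSpace ℝ (Fin d)) '' S)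
      = ENNReal.ofReal
          (|LinearMap.det (A : EuclideanSpace ℝ (Fin d) →ₗ[ℝ] EuclideanSpace ℝ (Fin d))| *
            ‖(LinearMap.adjoint
                (A.symm : EuclideanSpace ℝ (Fin d) →ₗ[ℝ] EuclideanSpace ℝ (Fin d))) ν‖) *
        μH[(d : ℝ) - 1] S := by
  have hν₀ : ν ≠ 0 := by rintro rfl; simp at hν
  have hd : 1 ≤ d :=
    Nat.one_le_iff_ne_zero.2 fun hd ↦ hν₀ (by subst hd; exact Subsingleton.elim _ _)
  have : Fact (finrank ℝ (EuclideanSpace ℝ (Fin d)) = (d - 1) + 1) := ⟨by simp; omega⟩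
  have hK : ((finrank ℝ (ℝ ∙ ν)ᗮ : ℕ) : ℝ) = d - 1 := by
    rw [Submodule.finrank_orthogonal_span_singleton (n := d - 1) hν₀, Nat.cast_sub hd,
      Nat.cast_one]
  have hS : S ⊆ (ℝ ∙ ν)ᗮ := fun x hx ↦
    Submodule.mem_orthogonal_singleton_iff_inner_left.2 (hSperp x hx)
  rw [← hK, ← A.normDet_comp_subtype_orthogonal hν]
  exact (A : EuclideanSpace ℝ (Fin d) →ₗ[ℝ] EuclideanSpace ℝ (Fin d))
    |>.hausdorffMeasure_image_of_subset_submodule hS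

/-- The Jacobian determinant of the restriction of an invertible linear map `A` of `ℝ^d`
to the hyperplane `ν^⊥` equals `|det A| ⬝ ‖(Aᵀ)⁻¹ ν‖`: for every Borel set `S ⊆ ν^⊥`,
`H^{d-1}(A(S)) = |det A| ⬝ ‖(Aᵀ)⁻¹ ν‖ ⬝ H^{d-1}(S)`.  Here `(Aᵀ)⁻¹` is realized as the
adjoint of `A⁻¹`. -/
theorem stmt0 (d : ℕ) (hd : 2 ≤ d)
    (A : EuclideanSpace ℝ (Fin d) ≃L[ℝ] EuclideanSpace ℝ (Fin d))
    (ν : EuclideanSpace ℝ (Fin d)) (hν : ‖ν‖ = 1)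
    (S : Set (EuclideanSpace ℝ (Fin d))) (hS : MeasurableSet S)
    (hSperp : ∀ x ∈ S, ⟪x, ν⟫ = 0) :
    μH[(d : ℝ) - 1] ((A : EuclideanSpace ℝ (Fin d) → EuclideanSpace ℝ (Fin d)) '' S)
      = ENNReal.ofReal
          (|LinearMap.det (A : EuclideanSpace ℝ (Fin d) →ₗ[ℝ] EuclideanSpace ℝ (Fin d))| *
            ‖(LinearMap.adjoint
                (A.symm : EuclideanSpace ℝ (Fin d) →ₗ[ℝ] EuclideanSpace ℝ (Fin d))) ν‖) *
        μH[(d : ℝ) - 1] S :=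
  stmt0_general d A ν hν S hSperp
end

section
/- Let A be an invertible linear map on ℝ^d and ν a unit vector. Write Aν = u + ũ where u is the orthogonal projection of Aν onto the hyperplane A(ν^⊥). Then ‖ũ‖ = 1/‖(Aᵀ)⁻¹ ν‖. -/
open scoped RealInnerProductSpace

/-! Since `⟪w, A x⟫ = ⟪ν, x⟫` for `w = (A⁻¹)* ν`, the hyperplane `A(ν^⊥)` is `w^⊥`. Hence `ũ` is
the projection of `Aν` onto the line `ℝ w`, of length `|⟪w, Aν⟫| / ‖w‖ = ‖ν‖² / ‖w‖`. -/

section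

variable {E : Type*} [NormedAddCommGroup E] [InnerProductSpace ℝ E]

theorem norm_sub_orthogonalProjectionOnto_eq_of_eq_orthogonal_singleton
    {K : Submodule ℝ E} [K.HasOrthogonalProjection] {w : E} (hK : K = (ℝ ∙ w)ᗮ) (v : E) :
    ‖v - (K.orthogonalProjectionOnto v : E)‖ = |⟪w, v⟫| / ‖w‖ := by
  subst hK
  rw [Submodule.coe_orthogonalProjectionOnto_apply, Submodule.starProjection_orthogonal_val,
    sub_sub_cancel, Submodule.starProjection_singleton, norm_smul]
  rcases eq_or_ne w 0 with rfl | hw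
  · simp
  · simp only [RCLike.ofReal_real_eq_id, id, norm_div, norm_pow, Real.norm_eq_abs, abs_norm]
    field_simp [norm_ne_zero_iff.mpr hw]

theorem map_orthogonal_singleton_eq_orthogonal_singleton_adjoint [FiniteDimensional ℝ E]
    (A : E ≃L[ℝ] E) (ν : E) :
    Submodule.map (A : E →ₗ[ℝ] E) (ℝ ∙ ν)ᗮ = (ℝ ∙ LinearMap.adjoint (A.symm : E →ₗ[ℝ] E) ν)ᗮ := by
  ext x
  rw [Submodule.mem_orthogonal_singleton_iff_inner_right, LinearMap.adjoint_inner_left]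
  exact (Submodule.mem_map_equiv (e := A.toLinearEquiv) _).trans
    Submodule.mem_orthogonal_singleton_iff_inner_right

end

/-- Write `Aν = u + ũ` where `u` is the orthogonal projection of `Aν` onto the hyperplane
`A(ν^⊥)`. Then `‖ũ‖ = 1 / ‖(Aᵀ)⁻¹ ν‖` (the transpose-inverse realized as the adjoint of
`A⁻¹`). -/
theorem stmt1 (d : ℕ) (A : EuclideanSpace ℝ (Fin d) ≃L[ℝ] EuclideanSpace ℝ (Fin d))
    (ν : EuclideanSpace ℝ (Fin d)) (hν : ‖ν‖ = 1) :
    ‖A ν - (Submodule.orthogonalProjectionOnto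
        (Submodule.map (A : EuclideanSpace ℝ (Fin d) →ₗ[ℝ] EuclideanSpace ℝ (Fin d))
          (ℝ ∙ ν)ᗮ) (A ν) :
        EuclideanSpace ℝ (Fin d))‖
      = 1 / ‖(LinearMap.adjoint
          (A.symm : EuclideanSpace ℝ (Fin d) →ₗ[ℝ] EuclideanSpace ℝ (Fin d))) ν‖ := by
  have hinner : ⟪LinearMap.adjoint (A.symm : EuclideanSpace ℝ (Fin d) →ₗ[ℝ] _) ν, A ν⟫ = 1 := by
    rw [LinearMap.adjoint_inner_left]
    simp [hν]
  rw [norm_sub_orthogonalProjectionOnto_eq_of_eq_orthogonal_singleton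
    (map_orthogonal_singleton_eq_orthogonal_singleton_adjoint A ν), hinner, abs_one]
end

section
/- For every λ ∈ [0,1] and every d ≥ 1, the relative isoperimetric profiles of the unit cubes satisfy I_{(0,1)^{d+1}}(λ) ≤ I_{(0,1)^d}(λ). -/
open MeasureTheory Real
open scoped RealInnerProductSpace MeasureTheory ENNReal symmDiff

noncomputable section

/-- The one-dimensional standard Gaussian density `φ(t) = (2π)^{-1/2} exp(-t²/2)`. -/
def gaussPdf (t : ℝ) : ℝ := (Real.sqrt (2 * Real.pi))⁻¹ * Real.exp (-t ^ 2 / 2)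

/-- The `d`-dimensional standard Gaussian density `φ_d(x) = (2π)^{-d/2} exp(-|x|²/2)`. -/
def gaussPdfD (d : ℕ) (x : EuclideanSpace ℝ (Fin d)) : ℝ :=
  (2 * Real.pi) ^ (-(d : ℝ) / 2) * Real.exp (-‖x‖ ^ 2 / 2)

/-- The standard Gaussian measure `γ_d` on `ℝ^d`. -/
def gaussMeasure (d : ℕ) : Measure (EuclideanSpace ℝ (Fin d)) :=
  volume.withDensity fun x => ENNReal.ofReal (gaussPdfD d x)

/-- The Gaussian-weighted `(d-1)`-dimensional Hausdorff measure `H^{d-1}_{γ_d} = φ_d · H^{d-1}`. -/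
def gaussHaus (d : ℕ) : Measure (EuclideanSpace ℝ (Fin d)) :=
  (μH[(d : ℝ) - 1]).withDensity fun x => ENNReal.ofReal (gaussPdfD d x)

/-- The open unit cube `(0,1)^d`. -/
def unitCube (d : ℕ) : Set (EuclideanSpace ℝ (Fin d)) :=
  {x | ∀ i, x i ∈ Set.Ioo (0 : ℝ) 1}

/-- The relative perimeter `Per(E, Ω)`: the total variation of the distributional gradient of
the indicator of `E` in `Ω`, i.e. the supremum of `∫_E div X` over `C¹` vector fields `X`
compactly supported in `Ω` with `‖X‖ ≤ 1`. -/
def relPerimeter (d : ℕ) (E Ω : Set (EuclideanSpace ℝ (Fin d))) : ℝ≥0∞ :=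
  ⨆ (X : EuclideanSpace ℝ (Fin d) → EuclideanSpace ℝ (Fin d)) (_ : ContDiff ℝ 1 X)
    (_ : HasCompactSupport X) (_ : tsupport X ⊆ Ω) (_ : ∀ x, ‖X x‖ ≤ 1),
    ENNReal.ofReal (∫ x in E, ∑ i, fderiv ℝ X x (EuclideanSpace.single i 1) i)

/-- The one-dimensional standard Gaussian CDF `Φ`. -/
def gaussCdf (t : ℝ) : ℝ := ∫ s in Set.Iic t, gaussPdf s

/-- The Gaussian isoperimetric profile `I_γ = φ ∘ Φ⁻¹`, extended by `0` outside `(0,1)`. -/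
def gaussIsopProfile (l : ℝ) : ℝ :=
  if l ≤ 0 ∨ 1 ≤ l then 0 else gaussPdf (Function.invFun gaussCdf l)

/-- The relative isoperimetric profile of the unit cube `(0,1)^d`. -/
def cubeIsopProfile (d : ℕ) (l : ℝ) : ℝ≥0∞ :=
  ⨅ (E : Set (EuclideanSpace ℝ (Fin d))) (_ : MeasurableSet E) (_ : E ⊆ unitCube d)
    (_ : volume E = ENNReal.ofReal l), relPerimeter d E (unitCube d)

/-- The measure-theoretic (essential) boundary of a set: points where the volume density of `E`
neither tends to `0` nor to `1`; for a set of finite perimeter it carries the same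
`H^{d-1}`-measure as the reduced boundary `∂*E`. -/
def essBoundary (d : ℕ) (E : Set (EuclideanSpace ℝ (Fin d))) : Set (EuclideanSpace ℝ (Fin d)) :=
  {x | ¬ Filter.Tendsto (fun r : ℝ => volume (E ∩ Metric.ball x r) / volume (Metric.ball x r))
        (nhdsWithin 0 (Set.Ioi 0)) (nhds 0) ∧
       ¬ Filter.Tendsto (fun r : ℝ => volume (E ∩ Metric.ball x r) / volume (Metric.ball x r))
        (nhdsWithin 0 (Set.Ioi 0)) (nhds 1)}

end

/-!
If `E ⊆ (0,1)^d` has volume `λ`, so does the cylinder `(0,1) × E ⊆ (0,1)^{d+1}`, and its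
relative perimeter is at most that of `E`. Indeed, for a test field `X` on `(0,1)^{d+1}`, Fubini
splits `∫_{(0,1) × E} div X` into the integral of `∂ₜ X₀`, which vanishes on every vertical
segment since `X` vanishes near `t = 0` and `t = 1`, and the integral over `t` of `∫_E div Y_t`,
where the horizontal slice `Y_t` of `X` is an admissible test field for `E`, so that each
`∫_E div Y_t` is at most `Per(E, (0,1)^d)`.
-/

open Set

noncomputable section

namespace CubeIsoperimetry

variable {d : ℕ}

def cons (d : ℕ) :
    (ℝ × EuclideanSpace ℝ (Fin d)) ≃L[ℝ] EuclideanSpace ℝ (Fin (d + 1)) :=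
  ((ContinuousLinearEquiv.refl ℝ ℝ).prodCongr (PiLp.continuousLinearEquiv 2 ℝ _)).trans
    ((Fin.consEquivL ℝ fun _ => ℝ).trans (PiLp.continuousLinearEquiv 2 ℝ _).symm)

@[simp] lemma cons_apply_zero (p : ℝ × EuclideanSpace ℝ (Fin d)) : cons d p 0 = p.1 := rfl

@[simp] lemma cons_apply_succ (p : ℝ × EuclideanSpace ℝ (Fin d)) (j : Fin d) :
    cons d p j.succ = p.2 j := rfl

@[simp] lemma cons_symm_apply_fst (y : EuclideanSpace ℝ (Fin (d + 1))) :
    ((cons d).symm y).1 = y 0 := rfl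

@[simp] lemma cons_symm_apply_snd (y : EuclideanSpace ℝ (Fin (d + 1))) (j : Fin d) :
    ((cons d).symm y).2 j = y j.succ := rfl

lemma cons_one_zero : cons d (1, 0) = EuclideanSpace.single 0 1 := by
  ext i
  cases i using Fin.cases <;> simp [Fin.succ_ne_zero]

lemma cons_zero_single (j : Fin d) :
    cons d (0, EuclideanSpace.single j 1) = EuclideanSpace.single j.succ 1 := by
  ext i
  cases i using Fin.cases <;> simp [(Fin.succ_ne_zero _).symm]

lemma norm_cons_symm_snd_le (y : EuclideanSpace ℝ (Fin (d + 1))) :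
    ‖((cons d).symm y).2‖ ≤ ‖y‖ := by
  simp only [EuclideanSpace.norm_eq, Fin.sum_univ_succ (fun i => ‖y i‖ ^ 2),
    cons_symm_apply_snd]
  exact Real.sqrt_le_sqrt (le_add_of_nonneg_left (sq_nonneg _))

lemma measurePreserving_cons : MeasurePreserving (cons d) (volume.prod volume) volume := by
  have h := ((EuclideanSpace.volume_preserving_symm_measurableEquiv_toLp (Fin (d + 1))).symm.comp
    (volume_preserving_piFinSuccAbove (fun _ : Fin (d + 1) => ℝ) 0).symm).comp
    ((MeasurePreserving.id volume).prod
      (EuclideanSpace.volume_preserving_symm_measurableEquiv_toLp (Fin d)))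
  convert h using 1
  · rfl
  · ext p i
    cases i using Fin.cases <;> rfl

lemma measurableEmbedding_cons : MeasurableEmbedding (cons d) :=
  (cons d).toHomeomorph.measurableEmbedding

lemma volume_image_cons (s : Set (ℝ × EuclideanSpace ℝ (Fin d))) :
    volume (cons d '' s) = volume.prod volume s := by
  rw [← measurePreserving_cons.map_eq, measurableEmbedding_cons.map_apply,
    (cons d).injective.preimage_image]

lemma volume_image_cons_Ioo_prod (E : Set (EuclideanSpace ℝ (Fin d))) :
    volume (cons d '' (Ioo 0 1 ×ˢ E)) = volume E := by
  rw [volume_image_cons, Measure.prod_prod, Real.volume_Ioo, sub_zero, ENNReal.ofReal_one, one_mul]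

lemma setIntegral_image_cons (f : EuclideanSpace ℝ (Fin (d + 1)) → ℝ)
    (s : Set (ℝ × EuclideanSpace ℝ (Fin d))) :
    ∫ y in cons d '' s, f y = ∫ p in s, f (cons d p) ∂volume.prod volume :=
  measurePreserving_cons.setIntegral_image_emb measurableEmbedding_cons f s

lemma unitCube_succ : unitCube (d + 1) = cons d '' (Ioo 0 1 ×ˢ unitCube d) := by
  ext y
  rw [← (cons d).apply_symm_apply y, (cons d).injective.mem_set_image]
  simp [unitCube, Fin.forall_fin_succ]

section Divergence

variable {n : ℕ}

def divergence (X : EuclideanSpace ℝ (Fin n) → EuclideanSpace ℝ (Fin n))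
    (y : EuclideanSpace ℝ (Fin n)) : ℝ :=
  ∑ i, fderiv ℝ X y (EuclideanSpace.single i 1) i

lemma relPerimeter_le {E Ω : Set (EuclideanSpace ℝ (Fin n))} {c : ℝ≥0∞}
    (h : ∀ X, ContDiff ℝ 1 X → HasCompactSupport X → tsupport X ⊆ Ω →
      (∀ y, ‖X y‖ ≤ 1) → ENNReal.ofReal (∫ y in E, divergence X y) ≤ c) :
    relPerimeter n E Ω ≤ c :=
  iSup₂_le fun X hX => iSup₂_le fun hXc hXΩ => iSup_le (h X hX hXc hXΩ)

lemma ofReal_setIntegral_divergence_le_relPerimeter {E Ω : Set (EuclideanSpace ℝ (Fin n))}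
    {X : EuclideanSpace ℝ (Fin n) → EuclideanSpace ℝ (Fin n)} (hX : ContDiff ℝ 1 X)
    (hXc : HasCompactSupport X) (hXΩ : tsupport X ⊆ Ω) (hX1 : ∀ y, ‖X y‖ ≤ 1) :
    ENNReal.ofReal (∫ y in E, divergence X y) ≤ relPerimeter n E Ω :=
  le_iSup₂_of_le X hX <| le_iSup₂_of_le hXc hXΩ <| le_iSup_of_le hX1 le_rfl

end Divergence

section Slice

variable (X : EuclideanSpace ℝ (Fin (d + 1)) → EuclideanSpace ℝ (Fin (d + 1)))

def sliceField (t : ℝ) (x : EuclideanSpace ℝ (Fin d)) : EuclideanSpace ℝ (Fin d) :=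
  ((cons d).symm (X (cons d (t, x)))).2

variable {X}

lemma contDiff_sliceField (hX : ContDiff ℝ 1 X) (t : ℝ) : ContDiff ℝ 1 (sliceField X t) := by
  unfold sliceField
  fun_prop

lemma norm_sliceField_le (hX1 : ∀ y, ‖X y‖ ≤ 1) (t : ℝ) (x : EuclideanSpace ℝ (Fin d)) :
    ‖sliceField X t x‖ ≤ 1 :=
  (norm_cons_symm_snd_le _).trans (hX1 _)

lemma tsupport_sliceField_subset_preimage (t : ℝ) :
    tsupport (sliceField X t) ⊆ (fun x => cons d (t, x)) ⁻¹' tsupport X :=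
  closure_minimal (fun x hx => subset_tsupport X fun h0 => hx (by simp [sliceField, h0]))
    ((isClosed_tsupport X).preimage (by fun_prop))

lemma tsupport_sliceField_subset {Ω : Set (EuclideanSpace ℝ (Fin d))} {I : Set ℝ}
    (hXΩ : tsupport X ⊆ cons d '' (I ×ˢ Ω)) (t : ℝ) : tsupport (sliceField X t) ⊆ Ω := by
  intro x hx
  have := hXΩ (tsupport_sliceField_subset_preimage t hx)
  rw [(cons d).injective.mem_set_image] at this
  exact this.2

lemma hasCompactSupport_sliceField (hXc : HasCompactSupport X) (t : ℝ) :
    HasCompactSupport (sliceField X t) := by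
  have hproj : Continuous fun y => ((cons d).symm y).2 := by fun_prop
  refine (hXc.image hproj).of_isClosed_subset (isClosed_tsupport _) fun x hx => ?_
  exact ⟨_, tsupport_sliceField_subset_preimage t hx, by simp⟩

lemma fderiv_sliceField_apply (hX : ContDiff ℝ 1 X) (t : ℝ) (x : EuclideanSpace ℝ (Fin d))
    (j : Fin d) :
    fderiv ℝ (sliceField X t) x (EuclideanSpace.single j 1) j
      = fderiv ℝ X (cons d (t, x)) (EuclideanSpace.single j.succ 1) j.succ := by
  have hX' := (hX.differentiable one_ne_zero (cons d (t, x))).hasFDerivAt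
  have hslice : HasFDerivAt (fun x => cons d (t, x))
      ((cons d).toContinuousLinearMap.comp (ContinuousLinearMap.inr ℝ ℝ _)) x :=
    (cons d).hasFDerivAt.comp x ((hasFDerivAt_const t x).prodMk (hasFDerivAt_id x))
  have hproj := ((ContinuousLinearMap.snd ℝ ℝ _).comp
    (cons d).symm.toContinuousLinearMap).hasFDerivAt (x := X (cons d (t, x)))
  have hcomp := hproj.comp x (hX'.comp x hslice)
  rw [HasFDerivAt.fderiv (f := sliceField X t) hcomp]
  simp [cons_zero_single]

lemma divergence_cons (hX : ContDiff ℝ 1 X) (t : ℝ) (x : EuclideanSpace ℝ (Fin d)) :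
    divergence X (cons d (t, x))
      = fderiv ℝ X (cons d (t, x)) (EuclideanSpace.single 0 1) 0
        + divergence (sliceField X t) x := by
  simp only [divergence, Fin.sum_univ_succ, fderiv_sliceField_apply hX]

lemma integral_Ioo_fderiv_cons_eq_zero (hX : ContDiff ℝ 1 X)
    {Ω : Set (EuclideanSpace ℝ (Fin d))}
    (hXΩ : tsupport X ⊆ cons d '' (Ioo 0 1 ×ˢ Ω)) (x : EuclideanSpace ℝ (Fin d)) :
    ∫ t in Ioo 0 1, fderiv ℝ X (cons d (t, x)) (EuclideanSpace.single 0 1) 0 = 0 := by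
  have hvanish : ∀ t ∉ Ioo (0 : ℝ) 1, X (cons d (t, x)) = 0 := fun t ht =>
    image_eq_zero_of_notMem_tsupport fun h => ht ((cons d).injective.mem_set_image.mp (hXΩ h)).1
  have hderiv (t : ℝ) : HasDerivAt (fun t => X (cons d (t, x)) 0)
      (fderiv ℝ X (cons d (t, x)) (EuclideanSpace.single 0 1) 0) t := by
    have hline : HasDerivAt (fun t => cons d (t, x)) (EuclideanSpace.single 0 1) t := by
      rw [← cons_one_zero]
      exact (cons d).hasFDerivAt.comp_hasDerivAt t
        ((hasDerivAt_id t).prodMk (hasDerivAt_const t x))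
    exact (EuclideanSpace.proj 0).hasFDerivAt.comp_hasDerivAt t
      ((hX.differentiable one_ne_zero _).hasFDerivAt.comp_hasDerivAt t hline)
  have hcont : Continuous fun t : ℝ =>
      fderiv ℝ X (cons d (t, x)) (EuclideanSpace.single 0 1) 0 := by
    have := hX.continuous_fderiv one_ne_zero
    fun_prop
  rw [← integral_Ioc_eq_integral_Ioo, ← intervalIntegral.integral_of_le zero_le_one,
    intervalIntegral.integral_eq_sub_of_hasDerivAt (fun t _ => hderiv t)
      (hcont.intervalIntegrable 0 1),
    hvanish 1 (by simp), hvanish 0 (by simp), sub_self]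

lemma setIntegral_divergence_image_cons_Ioo_prod_le (hX : ContDiff ℝ 1 X)
    (hXc : HasCompactSupport X) (hX1 : ∀ y, ‖X y‖ ≤ 1)
    {E Ω : Set (EuclideanSpace ℝ (Fin d))}
    (hXΩ : tsupport X ⊆ cons d '' (Ioo 0 1 ×ˢ Ω)) (hP : relPerimeter d E Ω ≠ ⊤) :
    ∫ y in cons d '' (Ioo 0 1 ×ˢ E), divergence X y ≤ (relPerimeter d E Ω).toReal := by
  set μ := (volume.restrict (Ioo (0 : ℝ) 1)).prod (volume.restrict E)
  have hμ : μ = (volume.prod volume).restrict (Ioo 0 1 ×ˢ E) := Measure.prod_restrict _ _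
  have hintegrable
      (g : (EuclideanSpace ℝ (Fin (d + 1)) →L[ℝ] EuclideanSpace ℝ (Fin (d + 1))) → ℝ)
      (hg : Continuous g) (hg0 : g 0 = 0) :
      Integrable (fun p => g (fderiv ℝ X (cons d p))) μ := by
    have hcont : Continuous fun p => g (fderiv ℝ X (cons d p)) :=
      hg.comp ((hX.continuous_fderiv one_ne_zero).comp (cons d).continuous)
    have hsupp := (hXc.fderiv (𝕜 := ℝ)).comp_left hg0 |>.comp_homeomorph (cons d).toHomeomorph
    rw [hμ]
    exact (hcont.integrable_of_hasCompactSupport hsupp).restrict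
  have hdiv : Integrable (fun p => divergence X (cons d p)) μ :=
    hintegrable (fun L => ∑ i, L (EuclideanSpace.single i 1) i) (by fun_prop) (by simp)
  have hvert : Integrable (fun p => fderiv ℝ X (cons d p) (EuclideanSpace.single 0 1) 0) μ :=
    hintegrable (fun L => L (EuclideanSpace.single 0 1) 0) (by fun_prop) (by simp)
  have hhor : Integrable (fun p => divergence (sliceField X p.1) p.2) μ :=
    (hdiv.sub hvert).congr (ae_of_all _ fun ⟨t, x⟩ => by simp [divergence_cons hX t x])
  have hslice (t : ℝ) :
      ∫ x in E, divergence (sliceField X t) x ≤ (relPerimeter d E Ω).toReal :=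
    (ENNReal.ofReal_le_iff_le_toReal hP).mp <| ofReal_setIntegral_divergence_le_relPerimeter
      (contDiff_sliceField hX t) (hasCompactSupport_sliceField hXc t)
      (tsupport_sliceField_subset hXΩ t) (norm_sliceField_le hX1 t)
  calc ∫ y in cons d '' (Ioo 0 1 ×ˢ E), divergence X y
      = ∫ p, divergence X (cons d p) ∂μ := by
        rw [setIntegral_image_cons, hμ]
    _ = ∫ p, fderiv ℝ X (cons d p) (EuclideanSpace.single 0 1) 0 ∂μ
          + ∫ p, divergence (sliceField X p.1) p.2 ∂μ := by
        rw [← integral_add hvert hhor]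
        simp only [divergence_cons hX]
    _ = ∫ t in Ioo 0 1, ∫ x in E, divergence (sliceField X t) x := by
        rw [integral_prod_symm _ hvert, integral_prod _ hhor]
        simp [integral_Ioo_fderiv_cons_eq_zero hX hXΩ]
    _ ≤ ∫ _ in Ioo (0 : ℝ) 1, (relPerimeter d E Ω).toReal :=
        integral_mono hhor.integral_prod_left (integrable_const _) hslice
    _ = (relPerimeter d E Ω).toReal := by simp

end Slice

lemma relPerimeter_image_cons_Ioo_prod_le (E Ω : Set (EuclideanSpace ℝ (Fin d))) :
    relPerimeter (d + 1) (cons d '' (Ioo 0 1 ×ˢ E)) (cons d '' (Ioo 0 1 ×ˢ Ω))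
      ≤ relPerimeter d E Ω := by
  rcases eq_or_ne (relPerimeter d E Ω) ⊤ with hP | hP
  · exact hP ▸ le_top
  refine relPerimeter_le fun X hX hXc hXΩ hX1 => ?_
  exact (ENNReal.ofReal_le_iff_le_toReal hP).mpr
    (setIntegral_divergence_image_cons_Ioo_prod_le hX hXc hX1 hXΩ hP)

end CubeIsoperimetry

end

open CubeIsoperimetry

theorem stmt8_general (d : ℕ) (l : ℝ) :
    cubeIsopProfile (d + 1) l ≤ cubeIsopProfile d l := by
  refine le_iInf₂ fun E hE => le_iInf₂ fun hEcube hEvol => ?_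
  have hcyl : MeasurableSet (cons d '' (Ioo 0 1 ×ˢ E)) :=
    measurableEmbedding_cons.measurableSet_image.mpr (measurableSet_Ioo.prod hE)
  have hcylCube : cons d '' (Ioo 0 1 ×ˢ E) ⊆ unitCube (d + 1) :=
    unitCube_succ ▸ image_mono (prod_mono subset_rfl hEcube)
  calc cubeIsopProfile (d + 1) l
      ≤ relPerimeter (d + 1) (cons d '' (Ioo 0 1 ×ˢ E)) (unitCube (d + 1)) :=
        iInf₂_le_of_le _ hcyl <| iInf₂_le_of_le hcylCube
          ((volume_image_cons_Ioo_prod E).trans hEvol) le_rfl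
    _ ≤ relPerimeter d E (unitCube d) :=
        unitCube_succ (d := d) ▸ relPerimeter_image_cons_Ioo_prod_le E (unitCube d)

/-- The isoperimetric profiles of the unit cubes are nonincreasing in the dimension:
`I_{(0,1)^{d+1}}(λ) ≤ I_{(0,1)^d}(λ)` for all `λ ∈ [0,1]` and `d ≥ 1`. -/
theorem stmt8 (d : ℕ) (hd : 1 ≤ d) (l : ℝ) (hl : l ∈ Set.Icc (0 : ℝ) 1) :
    cubeIsopProfile (d + 1) l ≤ cubeIsopProfile d l :=
  stmt8_general d l
end
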